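/- Let m ≥ 2 and let Ω be a nonempty open bounded convex subset of ℝ^m. Then diam(Ω) ≤ K·𝒥(Ω)^{1/2}·|Ω|^{−1/2} with K = 4·(m(m+1)²(m+2))^{1/2}; equivalently, 𝒥(Ω) ≥ diam(Ω)²·|Ω| / (16·m·(m+1)²·(m+2)). Here 𝒥(Ω) = (1/(2|Ω|))·∫_{Ω×Ω} |x−y|² dx dy is the moment of inertia of Ω with respect to its centre of mass. -/

import Mathlib

open MeasureTheory Metric

/-- The moment of inertia of a set `Ω ⊆ ℝ^m` with respect to its centre of mass:
`𝒥(Ω) = (1/(2|Ω|)) ∬_{Ω×Ω} |x-y|² dx dy`. -/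
noncomputable def momentOfInertia {m : ℕ} (Ω : Set (EuclideanSpace ℝ (Fin m))) : ℝ :=
  (1 / (2 * (volume Ω).toReal)) * ∫ p in Ω ×ˢ Ω, dist p.1 p.2 ^ 2

/-!
Fix `a, b ∈ Ω`, let `ℓ = ⟪b - a, ·⟫` and cut `Ω` at a median `p` of `ℓ`, so that both
`Ω ∩ {ℓ ≤ p}` and `Ω ∩ {ℓ ≥ p}` carry half of the volume. If `p` lies below the midpoint of
`ℓ a` and `ℓ b`, the homothety of centre `b` and ratio `1 - 1/(2m)` maps the upper half into
`Ω ∩ {ℓ ≥ p + (ℓ b - p)/(2m)}` and, by Bernoulli's inequality, keeps at least half of its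
volume; otherwise argue symmetrically from `a`. This yields `A, B ⊆ Ω` with
`|A| |B| ≥ |Ω|²/8` lying `|b - a|/(4m)` apart, hence
`∬_{Ω×Ω} |x - y|² ≥ |b - a|² |Ω|² / (128 m²)`. Take the supremum over `a, b`.
-/

open Set Filter Topology Module
open scoped ENNReal

theorem exists_half_le_measure_Iic_and_Ici (ν : Measure ℝ) [IsFiniteMeasure ν] :
    ∃ p, ν univ / 2 ≤ ν (Iic p) ∧ ν univ / 2 ≤ ν (Ici p) := by
  rcases eq_or_ne (ν univ) 0 with hν | hν
  · exact ⟨0, by simp [hν]⟩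
  set c := ν univ / 2
  have hc : c + c = ν univ := ENNReal.add_halves _
  have hc_top : c ≠ ∞ := ENNReal.div_ne_top (measure_ne_top _ _) two_ne_zero
  have hcν : c < ν univ := ENNReal.half_lt_self hν (measure_ne_top _ _)
  set S := {τ : ℝ | c ≤ ν (Iic τ)}
  have hS : S.Nonempty :=
    ((tendsto_measure_Iic_atTop ν).eventually (eventually_gt_nhds hcν)).exists.imp
      fun _ => le_of_lt
  obtain ⟨τ₀, hτ₀⟩ := ((tendsto_measure_Ici_atBot ν).eventually (eventually_gt_nhds hcν)).exists
  have hS_bdd : BddBelow S := by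
    refine ⟨τ₀, fun τ (hτ : c ≤ ν (Iic τ)) => not_lt.1 fun hlt => ?_⟩
    refine (measure_mono (μ := ν) (subset_univ (Iic τ ∪ Ici τ₀))).not_gt ?_
    rw [measure_union (Iic_disjoint_Ici.2 (not_le.2 hlt)) measurableSet_Ici, ← hc]
    exact ENNReal.add_lt_add_of_le_of_lt hc_top hτ hτ₀
  set p := sInf S
  have h_Iic : c ≤ ν (Iic p) := by
    have hlim := tendsto_measure_biInter_gt (μ := ν) (s := Iic) (a := p)
      (fun _ _ => measurableSet_Iic.nullMeasurableSet) (fun _ _ _ h => Iic_subset_Iic.2 h)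
      ⟨p + 1, by linarith, measure_ne_top _ _⟩
    rw [show ⋂ r > p, Iic r = Iic p by ext; simp [forall_gt_imp_ge_iff_le_of_dense]] at hlim
    refine ge_of_tendsto hlim (eventually_nhdsWithin_of_forall fun τ hτ => ?_)
    obtain ⟨s, hsS, hs⟩ := exists_lt_of_csInf_lt hS hτ
    exact hsS.trans (measure_mono (Iic_subset_Iic.2 hs.le))
  have h_Iio : ν (Iio p) ≤ c := by
    have hlim : Tendsto (fun n : ℕ => p - 1 / (n + 1)) atTop (𝓝 p) := by
      simpa using tendsto_const_nhds.sub (tendsto_one_div_add_atTop_nhds_zero_nat (𝕜 := ℝ))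
    rw [← iUnion_Iic_eq_Iio_of_lt_of_tendsto (fun n => sub_lt_self p Nat.one_div_pos_of_nat) hlim,
      Monotone.measure_iUnion fun i j hij => Iic_subset_Iic.2 (by gcongr)]
    exact iSup_le fun n => (not_le.1 (notMem_of_lt_csInf (s := S)
      (sub_lt_self p Nat.one_div_pos_of_nat) hS_bdd)).le
  refine ⟨p, h_Iic, ENNReal.le_of_add_le_add_left hc_top ?_⟩
  calc c + c = ν (Iio p) + ν (Ici p) := by
        rw [hc, ← compl_Iio, measure_add_measure_compl measurableSet_Iio]
    _ ≤ c + ν (Ici p) := by gcongr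

theorem half_le_one_sub_one_div_two_mul_pow {n : ℕ} (hn : n ≠ 0) :
    (1 / 2 : ℝ) ≤ (1 - 1 / (2 * n)) ^ n := by
  have hn' : (1 : ℝ) ≤ n := by exact_mod_cast Nat.one_le_iff_ne_zero.2 hn
  calc (1 / 2 : ℝ) = 1 + n * -(1 / (2 * n)) := by field_simp; ring
    _ ≤ (1 + -(1 / (2 * n))) ^ n := one_add_mul_le_pow (by
        rw [neg_le_neg_iff, div_le_iff₀ (by positivity)]; linarith) n
    _ = (1 - 1 / (2 * n)) ^ n := by rw [← sub_eq_add_neg]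

section HaarMeasure

variable {E : Type*} [NormedAddCommGroup E] [NormedSpace ℝ E] [FiniteDimensional ℝ E]
  [MeasurableSpace E] [BorelSpace E] (μ : Measure E) [μ.IsAddHaarMeasure]

theorem Convex.ofReal_pow_mul_measure_inter_preimage_Ici_le {Ω : Set E} (hΩ : Convex ℝ Ω)
    {c : E} (hc : c ∈ Ω) (ℓ : E →L[ℝ] ℝ) (θ : ℝ) {t : ℝ} (ht₀ : 0 ≤ t) (ht₁ : t ≤ 1) :
    ENNReal.ofReal (t ^ finrank ℝ E) * μ (Ω ∩ ℓ ⁻¹' Ici θ) ≤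
      μ (Ω ∩ ℓ ⁻¹' Ici (t * θ + (1 - t) * ℓ c)) := by
  rw [← abs_of_nonneg (pow_nonneg ht₀ _), ← Measure.addHaar_image_homothety]
  refine measure_mono ?_
  rintro _ ⟨x, ⟨hxΩ, hxθ⟩, rfl⟩
  have hx : AffineMap.homothety c t x = t • x + (1 - t) • c := by
    rw [AffineMap.homothety_apply, vsub_eq_sub, vadd_eq_add, smul_sub, sub_smul, one_smul]
    abel
  rw [hx]
  refine ⟨hΩ hxΩ hc ht₀ (sub_nonneg.2 ht₁) (add_sub_cancel t 1), ?_⟩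
  simp only [mem_preimage, mem_Ici, map_add, map_smul, smul_eq_mul]
  exact add_le_add_left (mul_le_mul_of_nonneg_left hxθ ht₀) _

theorem Convex.exists_separated_subsets_of_le_midpoint {Ω : Set E} (hΩ : Convex ℝ Ω)
    (hΩm : MeasurableSet Ω) (hΩμ : μ Ω ≠ ∞) {a b : E} (hb : b ∈ Ω) (ℓ : E →L[ℝ] ℝ)
    (hn : finrank ℝ E ≠ 0) {p : ℝ} (hlo : μ Ω / 2 ≤ μ (Ω ∩ ℓ ⁻¹' Iic p))
    (hhi : μ Ω / 2 ≤ μ (Ω ∩ ℓ ⁻¹' Ici p)) (hp : p ≤ (ℓ a + ℓ b) / 2) :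
    ∃ A ⊆ Ω, ∃ B ⊆ Ω, MeasurableSet A ∧ MeasurableSet B ∧
      μ.real Ω ^ 2 / 8 ≤ μ.real A * μ.real B ∧
      ∀ x ∈ A, ∀ y ∈ B, (ℓ b - ℓ a) / (4 * finrank ℝ E) ≤ ℓ y - ℓ x := by
  set n := finrank ℝ E
  have hn' : (1 : ℝ) ≤ n := by exact_mod_cast Nat.one_le_iff_ne_zero.2 hn
  set t : ℝ := 1 - 1 / (2 * n) with ht
  have ht₀ : 0 ≤ t := by
    rw [ht, sub_nonneg, div_le_one (by positivity)]
    linarith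
  have ht₁ : t ≤ 1 := sub_le_self _ (by positivity)
  have hfin : ∀ s, μ (Ω ∩ s) ≠ ∞ := fun s => measure_ne_top_of_subset inter_subset_left hΩμ
  refine ⟨Ω ∩ ℓ ⁻¹' Iic p, inter_subset_left, Ω ∩ ℓ ⁻¹' Ici (t * p + (1 - t) * ℓ b),
    inter_subset_left, hΩm.inter (ℓ.measurable measurableSet_Iic),
    hΩm.inter (ℓ.measurable measurableSet_Ici), ?_, ?_⟩
  · have hA := ENNReal.toReal_mono (hfin _) hlo
    have hB : ENNReal.ofReal (t ^ n) * (μ Ω / 2) ≤ μ (Ω ∩ ℓ ⁻¹' Ici (t * p + (1 - t) * ℓ b)) :=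
      le_trans (by gcongr) (hΩ.ofReal_pow_mul_measure_inter_preimage_Ici_le μ hb ℓ p ht₀ ht₁)
    replace hB := ENNReal.toReal_mono (hfin _) hB
    rw [ENNReal.toReal_div, ENNReal.toReal_ofNat] at hA
    rw [ENNReal.toReal_mul, ENNReal.toReal_div, ENNReal.toReal_ofNat,
      ENNReal.toReal_ofReal (pow_nonneg ht₀ _)] at hB
    simp only [← measureReal_def] at hA hB
    calc μ.real Ω ^ 2 / 8 = μ.real Ω / 2 * (1 / 2 * (μ.real Ω / 2)) := by ring
      _ ≤ μ.real (Ω ∩ ℓ ⁻¹' Iic p) * μ.real (Ω ∩ ℓ ⁻¹' Ici (t * p + (1 - t) * ℓ b)) := by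
        refine mul_le_mul hA (le_trans ?_ hB) (by positivity) measureReal_nonneg
        gcongr
        exact half_le_one_sub_one_div_two_mul_pow hn
  · rintro x ⟨-, hx⟩ y ⟨-, hy⟩
    simp only [mem_preimage, mem_Iic, mem_Ici] at hx hy
    have : (ℓ b - ℓ a) / (4 * n) ≤ (1 - t) * (ℓ b - p) := by
      rw [ht, sub_sub_cancel, show (ℓ b - ℓ a) / (4 * n) = 1 / (2 * n) * ((ℓ b - ℓ a) / 2) by
        field_simp; ring]
      gcongr
      linarith
    linarith

theorem Convex.exists_separated_subsets {Ω : Set E} (hΩ : Convex ℝ Ω) (hΩm : MeasurableSet Ω)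
    (hΩμ : μ Ω ≠ ∞) {a b : E} (ha : a ∈ Ω) (hb : b ∈ Ω) (ℓ : E →L[ℝ] ℝ)
    (hn : finrank ℝ E ≠ 0) :
    ∃ A ⊆ Ω, ∃ B ⊆ Ω, MeasurableSet A ∧ MeasurableSet B ∧
      μ.real Ω ^ 2 / 8 ≤ μ.real A * μ.real B ∧
      ∀ x ∈ A, ∀ y ∈ B, (ℓ b - ℓ a) / (4 * finrank ℝ E) ≤ ℓ y - ℓ x := by
  have : IsFiniteMeasure (μ.restrict Ω) := isFiniteMeasure_restrict.2 hΩμ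
  have hmap : ∀ s, MeasurableSet s → (μ.restrict Ω).map ℓ s = μ (Ω ∩ ℓ ⁻¹' s) := fun s hs => by
    rw [Measure.map_apply ℓ.measurable hs, Measure.restrict_apply (ℓ.measurable hs), inter_comm]
  obtain ⟨p, hlo, hhi⟩ := exists_half_le_measure_Iic_and_Ici ((μ.restrict Ω).map ℓ)
  rw [hmap _ MeasurableSet.univ, preimage_univ, inter_univ] at hlo hhi
  rw [hmap _ measurableSet_Iic] at hlo
  rw [hmap _ measurableSet_Ici] at hhi
  rcases le_total p ((ℓ a + ℓ b) / 2) with hp | hp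
  · exact hΩ.exists_separated_subsets_of_le_midpoint μ hΩm hΩμ hb ℓ hn hlo hhi hp
  have hneg : ∀ q, (-ℓ) ⁻¹' Iic (-q) = ℓ ⁻¹' Ici q := fun q => by ext; simp
  have hneg' : ∀ q, (-ℓ) ⁻¹' Ici (-q) = ℓ ⁻¹' Iic q := fun q => by ext; simp
  obtain ⟨A, hAΩ, B, hBΩ, hA, hB, hAB, hgap⟩ :=
    hΩ.exists_separated_subsets_of_le_midpoint μ hΩm hΩμ (a := b) ha (-ℓ) hn (p := -p)
      (by rwa [hneg]) (by rwa [hneg']) (by simp only [neg_apply]; linarith)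
  refine ⟨B, hBΩ, A, hAΩ, hB, hA, by rwa [mul_comm], fun x hx y hy => ?_⟩
  have := hgap y hy x hx
  simp only [neg_apply, neg_sub_neg] at this
  linarith

end HaarMeasure

section PseudoMetricSpace

variable {α : Type*} [PseudoMetricSpace α] [SecondCountableTopology α] [MeasurableSpace α]
  [OpensMeasurableSpace α] (μ : Measure α) [SFinite μ]

theorem integrableOn_dist_sq_prod {Ω : Set α} (hΩ : Bornology.IsBounded Ω)
    (hΩm : MeasurableSet Ω) (hΩμ : μ Ω ≠ ∞) :
    IntegrableOn (fun p : α × α => dist p.1 p.2 ^ 2) (Ω ×ˢ Ω) (μ.prod μ) := by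
  refine Measure.integrableOn_of_bounded (M := diam Ω ^ 2) ?_
    (continuous_dist.pow 2).aestronglyMeasurable ?_
  · rw [Measure.prod_prod]
    exact ENNReal.mul_ne_top hΩμ hΩμ
  · filter_upwards [ae_restrict_mem (hΩm.prod hΩm)] with p hp
    rw [Real.norm_eq_abs, abs_pow, abs_dist]
    exact pow_le_pow_left₀ dist_nonneg (dist_le_diam_of_mem hΩ hp.1 hp.2) 2

theorem sq_mul_measureReal_le_setIntegral_dist_sq {Ω A B : Set α} (hΩ : Bornology.IsBounded Ω)
    (hΩm : MeasurableSet Ω) (hΩμ : μ Ω ≠ ∞) (hA : MeasurableSet A) (hB : MeasurableSet B)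
    (hAΩ : A ⊆ Ω) (hBΩ : B ⊆ Ω) {r : ℝ} (hr : 0 ≤ r) (hAB : ∀ x ∈ A, ∀ y ∈ B, r ≤ dist x y) :
    r ^ 2 * (μ.real A * μ.real B) ≤ ∫ p in Ω ×ˢ Ω, dist p.1 p.2 ^ 2 ∂μ.prod μ := by
  have hint := integrableOn_dist_sq_prod μ hΩ hΩm hΩμ
  calc r ^ 2 * (μ.real A * μ.real B) = (μ.prod μ).real (A ×ˢ B) • r ^ 2 := by
        rw [smul_eq_mul, measureReal_prod_prod, mul_comm]
    _ ≤ ∫ p in A ×ˢ B, dist p.1 p.2 ^ 2 ∂μ.prod μ := by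
        refine setIntegral_ge_of_const_le (hA.prod hB) ?_
          (fun p hp => pow_le_pow_left₀ hr (hAB _ hp.1 _ hp.2) 2)
          (hint.mono_set (prod_mono hAΩ hBΩ))
        rw [Measure.prod_prod]
        exact ENNReal.mul_ne_top (measure_ne_top_of_subset hAΩ hΩμ)
          (measure_ne_top_of_subset hBΩ hΩμ)
    _ ≤ ∫ p in Ω ×ˢ Ω, dist p.1 p.2 ^ 2 ∂μ.prod μ :=
        setIntegral_mono_set hint (Eventually.of_forall fun _ => sq_nonneg _)
          (Eventually.of_forall (prod_mono hAΩ hBΩ))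

end PseudoMetricSpace

theorem Metric.diam_sq_le_of_forall_dist_sq_le {α : Type*} [PseudoMetricSpace α] {s : Set α}
    {C : ℝ} (hC : 0 ≤ C) (h : ∀ x ∈ s, ∀ y ∈ s, dist x y ^ 2 ≤ C) : diam s ^ 2 ≤ C := by
  have : diam s ≤ √C := diam_le_of_forall_dist_le (Real.sqrt_nonneg C)
    fun x hx y hy => Real.le_sqrt_of_sq_le (h x hx y hy)
  calc diam s ^ 2 ≤ √C ^ 2 := pow_le_pow_left₀ diam_nonneg this 2
    _ = C := Real.sq_sqrt hC

section InnerProductSpace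

variable {E : Type*} [NormedAddCommGroup E] [InnerProductSpace ℝ E] [FiniteDimensional ℝ E]
  [MeasurableSpace E] [BorelSpace E] (μ : Measure E) [μ.IsAddHaarMeasure]

theorem Convex.dist_sq_mul_measureReal_sq_le {Ω : Set E} (hΩ : Convex ℝ Ω)
    (hΩm : MeasurableSet Ω) (hΩb : Bornology.IsBounded Ω) (hn : finrank ℝ E ≠ 0)
    {a b : E} (ha : a ∈ Ω) (hb : b ∈ Ω) :
    dist a b ^ 2 * μ.real Ω ^ 2 ≤
      128 * finrank ℝ E ^ 2 * ∫ p in Ω ×ˢ Ω, dist p.1 p.2 ^ 2 ∂μ.prod μ := by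
  have hΩμ : μ Ω ≠ ∞ := hΩb.measure_lt_top.ne
  set n := finrank ℝ E
  have hn' : (0 : ℝ) < n := by positivity
  set d := dist a b
  obtain ⟨A, hAΩ, B, hBΩ, hA, hB, hAB, hgap⟩ :=
    hΩ.exists_separated_subsets μ hΩm hΩμ ha hb (innerSL ℝ (b - a)) hn
  have hr : ∀ x ∈ A, ∀ y ∈ B, d / (4 * n) ≤ dist x y := fun x hx y hy => by
    have h₁ : d ^ 2 / (4 * n) ≤ inner ℝ (b - a) (y - x) := by
      have := hgap x hx y hy
      simp only [innerSL_apply_apply, ← inner_sub_right, real_inner_self_eq_norm_sq] at this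
      rwa [← dist_eq_norm, dist_comm] at this
    have h₂ : inner ℝ (b - a) (y - x) ≤ d * dist x y := by
      have := real_inner_le_norm (b - a) (y - x)
      rwa [← dist_eq_norm, ← dist_eq_norm, dist_comm b, dist_comm y] at this
    rcases (dist_nonneg : 0 ≤ d).eq_or_lt with hd | hd
    · rw [show d = 0 from hd.symm, zero_div]
      exact dist_nonneg
    · refine le_of_mul_le_mul_left ?_ hd
      calc d * (d / (4 * n)) = d ^ 2 / (4 * n) := by ring
        _ ≤ d * dist x y := h₁.trans h₂
  calc d ^ 2 * μ.real Ω ^ 2 = 128 * n ^ 2 * ((d / (4 * n)) ^ 2 * (μ.real Ω ^ 2 / 8)) := by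
        field_simp; ring
    _ ≤ 128 * n ^ 2 * ((d / (4 * n)) ^ 2 * (μ.real A * μ.real B)) := by gcongr
    _ ≤ 128 * n ^ 2 * ∫ p in Ω ×ˢ Ω, dist p.1 p.2 ^ 2 ∂μ.prod μ := by
        gcongr
        exact sq_mul_measureReal_le_setIntegral_dist_sq μ hΩb hΩm hΩμ hA hB hAΩ hBΩ
          (by positivity) hr

theorem Convex.diam_sq_mul_measureReal_sq_le {Ω : Set E} (hΩ : Convex ℝ Ω)
    (hΩm : MeasurableSet Ω) (hΩb : Bornology.IsBounded Ω) (hΩ₀ : μ Ω ≠ 0)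
    (hn : finrank ℝ E ≠ 0) :
    diam Ω ^ 2 * μ.real Ω ^ 2 ≤
      128 * finrank ℝ E ^ 2 * ∫ p in Ω ×ˢ Ω, dist p.1 p.2 ^ 2 ∂μ.prod μ := by
  have hV : 0 < μ.real Ω := ENNReal.toReal_pos hΩ₀ hΩb.measure_lt_top.ne
  have hI : 0 ≤ ∫ p in Ω ×ˢ Ω, dist p.1 p.2 ^ 2 ∂μ.prod μ :=
    setIntegral_nonneg (hΩm.prod hΩm) fun _ _ => sq_nonneg _
  rw [← le_div_iff₀ (by positivity)]
  exact diam_sq_le_of_forall_dist_sq_le (by positivity) fun a ha b hb =>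
    (le_div_iff₀ (by positivity)).2 (hΩ.dist_sq_mul_measureReal_sq_le μ hΩm hΩb hn ha hb)

end InnerProductSpace

/-- for a nonempty open bounded convex set `Ω ⊆ ℝ^m` (`m ≥ 2`),
`𝒥(Ω) ≥ diam(Ω)² |Ω| / (16 m (m+1)² (m+2))`, i.e.
`diam(Ω) ≤ 4 (m(m+1)²(m+2))^{1/2} 𝒥(Ω)^{1/2} |Ω|^{-1/2}`. -/
theorem momentOfInertia_ge_diam_sq (m : ℕ) (hm : 2 ≤ m)
    (Ω : Set (EuclideanSpace ℝ (Fin m)))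
    (hne : Ω.Nonempty) (hbd : Bornology.IsBounded Ω)
    (hopen : IsOpen Ω) (hconv : Convex ℝ Ω) :
    diam Ω ^ 2 * (volume Ω).toReal / (16 * m * (m + 1) ^ 2 * (m + 2)) ≤
      momentOfInertia Ω := by
  have hΩ₀ := hopen.measure_ne_zero volume hne
  have hV : 0 < (volume Ω).toReal := ENNReal.toReal_pos hΩ₀ hbd.measure_lt_top.ne
  have key := hconv.diam_sq_mul_measureReal_sq_le volume hopen.measurableSet hbd hΩ₀
    (by rw [finrank_euclideanSpace_fin]; omega)
  rw [finrank_euclideanSpace_fin, ← Measure.volume_eq_prod, measureReal_def] at key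
  have hm' : (0 : ℝ) ≤ m - 2 := by rw [sub_nonneg]; exact_mod_cast hm
  have hconst : (256 : ℝ) * m ^ 2 ≤ 16 * m * (m + 1) ^ 2 * (m + 2) := by
    nlinarith [mul_nonneg (mul_nonneg hm' hm') hm', mul_nonneg hm' hm']
  calc diam Ω ^ 2 * (volume Ω).toReal / (16 * m * (m + 1) ^ 2 * (m + 2))
      ≤ diam Ω ^ 2 * (volume Ω).toReal / (256 * m ^ 2) :=
        div_le_div_of_nonneg_left (by positivity) (by positivity) hconst
    _ ≤ momentOfInertia Ω := by
        rw [momentOfInertia, div_le_iff₀ (by positivity)]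
        field_simp
        nlinarith
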